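/- Let 0 < p < 1 and set q* = √p/(√p + √(1−p)). Then for every q ∈ [0,1], D(q‖p) − H(q) ≥ D(q*‖p) − H(q*) = −2·log₂(√p + √(1−p)); that is, the minimum over q ∈ [0,1] of D(q‖p) − H(q) equals −2·log₂(√p + √(1−p)) and is attained at q = q*. -/

import Mathlib

/-!
Write `q* = √p / s` with `s = √p + √(1-p)`, so that `p = (q* s)²` and `1 - p = ((1 - q*) s)²`.
Substituting these into the logarithms gives the identity `D(q‖p) - H(q) = 2 D(q‖q*) - 2 log₂ s`,
and Gibbs' inequality `D(q‖q*) ≥ 0`, with equality at `q = q*`, finishes the proof.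
-/

open Real Set

/-- Binary entropy function (base 2), with `0 * log 0 = 0`. -/
noncomputable def binH (x : ℝ) : ℝ := -(x * Real.logb 2 x) - (1 - x) * Real.logb 2 (1 - x)

/-- Binary Kullback–Leibler divergence (base 2). -/
noncomputable def binD (q p : ℝ) : ℝ :=
  q * Real.logb 2 (q / p) + (1 - q) * Real.logb 2 ((1 - q) / (1 - p))

lemma mul_logb_div_of_nonneg {q : ℝ} (c : ℝ) (hq : 0 ≤ q) (hc : c ≠ 0) :
    q * logb 2 (q / c) = q * logb 2 q - q * logb 2 c := by
  rcases hq.eq_or_lt with rfl | hq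
  · simp
  · rw [logb_div hq.ne' hc]; ring

lemma sub_le_mul_log_div {x c : ℝ} (hx : 0 ≤ x) (hc : 0 < c) : x - c ≤ x * log (x / c) := by
  have h := InformationTheory.klFun_nonneg (div_nonneg hx hc.le)
  rw [InformationTheory.klFun] at h
  have h' := mul_nonneg hc.le h
  field_simp at h'
  linarith

lemma binD_nonneg {q p : ℝ} (hq0 : 0 ≤ q) (hq1 : q ≤ 1) (hp0 : 0 < p) (hp1 : p < 1) :
    0 ≤ binD q p := by
  have hq := sub_le_mul_log_div hq0 hp0
  have hq' := sub_le_mul_log_div (sub_nonneg.2 hq1) (sub_pos.2 hp1)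
  have hlog : binD q p = (q * log (q / p) + (1 - q) * log ((1 - q) / (1 - p))) / log 2 := by
    rw [binD, logb, logb]; ring
  rw [hlog]
  exact div_nonneg (by linarith) (log_pos one_lt_two).le

lemma binD_self (q : ℝ) : binD q q = 0 := by
  have h (x : ℝ) : logb 2 (x / x) = 0 := by
    rcases eq_or_ne x 0 with rfl | hx <;> simp [*]
  simp [binD, h]

lemma binD_sub_binH_eq {q p t s : ℝ} (hq0 : 0 ≤ q) (hq1 : q ≤ 1) (ht0 : 0 < t) (ht1 : t < 1)
    (hs : 0 < s) (hp : p = (t * s) ^ 2) (hp' : 1 - p = ((1 - t) * s) ^ 2) :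
    binD q p - binH q = 2 * binD q t - 2 * logb 2 s := by
  have ht1' : 1 - t ≠ 0 := (sub_pos.2 ht1).ne'
  have hp0 : p ≠ 0 := by rw [hp]; positivity
  have hp1 : 1 - p ≠ 0 := by rw [hp']; exact pow_ne_zero _ (mul_ne_zero ht1' hs.ne')
  have hlogp : logb 2 p = 2 * (logb 2 t + logb 2 s) := by
    rw [hp, logb_pow, logb_mul ht0.ne' hs.ne']; push_cast; ring
  have hlogp' : logb 2 (1 - p) = 2 * (logb 2 (1 - t) + logb 2 s) := by
    rw [hp', logb_pow, logb_mul ht1' hs.ne']; push_cast; ring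
  have hq1' : 0 ≤ 1 - q := sub_nonneg.2 hq1
  rw [binD, binD, binH, mul_logb_div_of_nonneg p hq0 hp0, mul_logb_div_of_nonneg _ hq1' hp1,
    mul_logb_div_of_nonneg t hq0 ht0.ne', mul_logb_div_of_nonneg _ hq1' ht1', hlogp, hlogp']
  ring

/-- for `0 < p < 1` and `q* = √p/(√p+√(1−p))`, the minimum over
`q ∈ [0,1]` of `D(q‖p) − H(q)` equals `−2·log₂(√p+√(1−p))` and is attained at `q*`. -/
theorem stmt12 (p : ℝ) (hp0 : 0 < p) (hp1 : p < 1) :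
    (∀ q ∈ Set.Icc (0:ℝ) 1,
      binD (Real.sqrt p / (Real.sqrt p + Real.sqrt (1 - p))) p -
          binH (Real.sqrt p / (Real.sqrt p + Real.sqrt (1 - p))) ≤ binD q p - binH q) ∧
    binD (Real.sqrt p / (Real.sqrt p + Real.sqrt (1 - p))) p -
        binH (Real.sqrt p / (Real.sqrt p + Real.sqrt (1 - p))) =
      -2 * Real.logb 2 (Real.sqrt p + Real.sqrt (1 - p)) := by
  have ha : 0 < √p := sqrt_pos.2 hp0
  have hb : 0 < √(1 - p) := sqrt_pos.2 (sub_pos.2 hp1)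
  set s := √p + √(1 - p)
  have hs : 0 < s := add_pos ha hb
  set t := √p / s
  have ht0 : 0 < t := div_pos ha hs
  have ht1 : t < 1 := (div_lt_one hs).2 (lt_add_of_pos_right _ hb)
  have hts : t * s = √p := div_mul_cancel₀ _ hs.ne'
  have hts' : (1 - t) * s = √(1 - p) := by rw [sub_mul, hts, one_mul]; ring
  have hdecomp : ∀ q ∈ Icc (0 : ℝ) 1, binD q p - binH q = 2 * binD q t - 2 * logb 2 s :=
    fun q hq => binD_sub_binH_eq hq.1 hq.2 ht0 ht1 hs
      (by rw [hts, sq_sqrt hp0.le]) (by rw [hts', sq_sqrt (sub_pos.2 hp1).le])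
  have hmin : binD t p - binH t = -2 * logb 2 s := by
    rw [hdecomp t ⟨ht0.le, ht1.le⟩, binD_self]; ring
  refine ⟨fun q hq => ?_, hmin⟩
  rw [hmin, hdecomp q hq]
  linarith [binD_nonneg hq.1 hq.2 ht0 ht1]
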